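/- Suppose (d̂, α̂) minimizes (d, α) ↦ ‖E − dαᵀ‖_F² over all unit vectors d ∈ R^d and all α ∈ R^n with at most k nonzero entries, with Eα̂ ≠ 0 and α̂ ≠ 0. Then ‖α̂‖₂² = ‖Eα̂‖₂. -/

import Mathlib

/-!
Test the minimality of `(d̂, α̂)` against the competitors `(Eα̂ / ‖Eα̂‖, t • α̂)`, whose sparsity is
at most that of `α̂`. Expanding the Frobenius norm and bounding `⟪d̂, Eα̂⟫ ≤ ‖Eα̂‖` by Cauchy–Schwarz
gives `‖α̂‖² t² - 2 ‖Eα̂‖ t ≥ ‖α̂‖² - 2 ‖Eα̂‖` for every real `t`: this quadratic is minimal at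
`t = 1`, which forces `‖α̂‖² = ‖Eα̂‖`.
-/

open Matrix BigOperators

noncomputable def frob2 {d n : ℕ} (M : Matrix (Fin d) (Fin n) ℝ) : ℝ :=
  ∑ i, ∑ j, (M i j) ^ 2

noncomputable def enorm2 {n : ℕ} (v : Fin n → ℝ) : ℝ :=
  Real.sqrt (∑ i, v i ^ 2)

noncomputable def spars {n : ℕ} (v : Fin n → ℝ) : ℕ :=
  Nat.card {i : Fin n // v i ≠ 0}

theorem frob2_sub_vecMulVec {d n : ℕ} (E : Matrix (Fin d) (Fin n) ℝ) (u : Fin d → ℝ)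
    (a : Fin n → ℝ) :
    frob2 (E - vecMulVec u a) =
      frob2 E - 2 * (u ⬝ᵥ E *ᵥ a) + (∑ i, u i ^ 2) * ∑ j, a j ^ 2 := by
  rw [Finset.sum_mul_sum]
  simp only [frob2, Matrix.sub_apply, vecMulVec_apply, mulVec, dotProduct, Finset.mul_sum,
    ← Finset.sum_sub_distrib, ← Finset.sum_add_distrib]
  exact Finset.sum_congr rfl fun i _ => Finset.sum_congr rfl fun j _ => by ring

theorem spars_smul_le {n : ℕ} (t : ℝ) (v : Fin n → ℝ) : spars (t • v) ≤ spars v :=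
  Nat.card_mono (Set.toFinite _) fun i (hi : t * v i ≠ 0) => right_ne_zero_of_mul hi

theorem dotProduct_le_enorm2 {n : ℕ} {u : Fin n → ℝ} (hu : ∑ i, u i ^ 2 = 1) (v : Fin n → ℝ) :
    u ⬝ᵥ v ≤ enorm2 v := by
  simpa [hu, dotProduct, enorm2] using Real.sum_mul_le_sqrt_mul_sqrt Finset.univ u v

theorem exists_unit_dotProduct_eq_enorm2 {n : ℕ} {v : Fin n → ℝ} (hv : v ≠ 0) :
    ∃ u : Fin n → ℝ, ∑ i, u i ^ 2 = 1 ∧ u ⬝ᵥ v = enorm2 v := by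
  have hsq : enorm2 v ^ 2 = ∑ i, v i ^ 2 := Real.sq_sqrt (by positivity)
  have hpos : 0 < enorm2 v := by
    obtain ⟨i, hi⟩ := Function.ne_iff.mp hv
    exact Real.sqrt_pos.mpr
      (Finset.sum_pos' (fun j _ => sq_nonneg _) ⟨i, Finset.mem_univ i, pow_two_pos_of_ne_zero hi⟩)
  refine ⟨(enorm2 v)⁻¹ • v, ?_, ?_⟩
  · simp only [Pi.smul_apply, smul_eq_mul, mul_pow, ← Finset.mul_sum, ← hsq]
    field_simp
  · rw [smul_dotProduct, smul_eq_mul, dotProduct, ← Finset.sum_congr rfl fun i _ => sq (v i),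
      ← hsq]
    field_simp

theorem eq_of_forall_le_quadratic {a b : ℝ} (h : ∀ t : ℝ, a - 2 * b ≤ a * t ^ 2 - 2 * b * t) :
    a = b := by
  have hdisc : discrim a (-2 * b) (2 * b - a) ≤ 0 :=
    discrim_le_zero fun t => by linarith [h t, sq t]
  -- the discriminant is `4 (a - b) ^ 2`
  rw [discrim] at hdisc
  nlinarith [sq_nonneg (a - b)]

theorem stmt6_general (d n k : ℕ) (E : Matrix (Fin d) (Fin n) ℝ)
    (dh : Fin d → ℝ) (ah : Fin n → ℝ)
    (hd : ∑ i, dh i ^ 2 = 1) (ha : spars ah ≤ k)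
    (hmin : ∀ (u : Fin d → ℝ) (a : Fin n → ℝ), ∑ i, u i ^ 2 = 1 → spars a ≤ k →
        frob2 (E - Matrix.vecMulVec dh ah) ≤ frob2 (E - Matrix.vecMulVec u a))
    (hEa : E.mulVec ah ≠ 0) :
    ∑ i, ah i ^ 2 = enorm2 (E.mulVec ah) := by
  obtain ⟨u, hu, huE⟩ := exists_unit_dotProduct_eq_enorm2 hEa
  refine eq_of_forall_le_quadratic fun t => ?_
  have hopt := hmin u (t • ah) hu ((spars_smul_le t ah).trans ha)
  have hcs := dotProduct_le_enorm2 hd (E *ᵥ ah)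
  rw [frob2_sub_vecMulVec, frob2_sub_vecMulVec, hd, hu, mulVec_smul, dotProduct_smul, huE] at hopt
  simp only [Pi.smul_apply, smul_eq_mul, mul_pow, ← Finset.mul_sum] at hopt
  linarith

theorem stmt6 (d n k : ℕ) (hk : 1 ≤ k) (E : Matrix (Fin d) (Fin n) ℝ)
    (dh : Fin d → ℝ) (ah : Fin n → ℝ)
    (hd : ∑ i, dh i ^ 2 = 1) (ha : spars ah ≤ k)
    (hmin : ∀ (u : Fin d → ℝ) (a : Fin n → ℝ), ∑ i, u i ^ 2 = 1 → spars a ≤ k →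
        frob2 (E - Matrix.vecMulVec dh ah) ≤ frob2 (E - Matrix.vecMulVec u a))
    (hEa : E.mulVec ah ≠ 0) (hah : ah ≠ 0) :
    ∑ i, ah i ^ 2 = enorm2 (E.mulVec ah) :=
  stmt6_general d n k E dh ah hd ha hmin hEa
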